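/- Let X take values in {1,...,n} with strictly positive distribution, and for nonempty sets a, b ⊆ {2,...,n}, let X_a, X_b be the indicators of the events X ∈ a, X ∈ b respectively. If a ≠ b then H(X_a | X_b) > 0 and H(X_b | X_a) > 0. -/
import Mathlib


open scoped BigOperators

/-- `μ` is a probability mass function on the finite sample space `Ω`. -/
def IsPMF {Ω : Type*} [Fintype Ω] (μ : Ω → ℝ) : Prop :=
  (∀ ω, 0 ≤ μ ω) ∧ ∑ ω, μ ω = 1

/-- The probability that the random variable `X` takes the value `s`. -/
noncomputable def prob {Ω S : Type*} [Fintype Ω] [DecidableEq S]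
    (μ : Ω → ℝ) (X : Ω → S) (s : S) : ℝ :=
  ∑ ω ∈ Finset.univ.filter fun ω => X ω = s, μ ω

/-- Shannon entropy (natural logarithm) of a random variable with finite codomain. -/
noncomputable def entropy {Ω S : Type*} [Fintype Ω] [Fintype S] [DecidableEq S]
    (μ : Ω → ℝ) (X : Ω → S) : ℝ :=
  ∑ s, Real.negMulLog (prob μ X s)

/-- Conditional Shannon entropy `H(X | Y) = H(X, Y) - H(Y)`. -/
noncomputable def condEntropy {Ω S T : Type*} [Fintype Ω] [Fintype S] [Fintype T]
    [DecidableEq S] [DecidableEq T] (μ : Ω → ℝ) (X : Ω → S) (Y : Ω → T) : ℝ :=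
  entropy μ (fun ω => (X ω, Y ω)) - entropy μ Y

lemma negMulLog_add_lt {p q : ℝ} (hp : 0 < p) (hq : 0 < q) :
    Real.negMulLog (p + q) < Real.negMulLog p + Real.negMulLog q := by
  have h1 : p * Real.log p < p * Real.log (p + q) :=
    mul_lt_mul_of_pos_left (Real.log_lt_log hp (by linarith)) hp
  have h2 : q * Real.log q < q * Real.log (p + q) :=
    mul_lt_mul_of_pos_left (Real.log_lt_log hq (by linarith)) hq
  simp only [Real.negMulLog]
  nlinarith

lemma negMulLog_add_le {p q : ℝ} (hp : 0 ≤ p) (hq : 0 ≤ q) :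
    Real.negMulLog (p + q) ≤ Real.negMulLog p + Real.negMulLog q := by
  rcases hp.eq_or_lt with h | h
  · simp [← h, Real.negMulLog_zero]
  rcases hq.eq_or_lt with h' | h'
  · simp [← h', Real.negMulLog_zero]
  exact (negMulLog_add_lt h h').le

lemma prob_nonneg {Ω S : Type*} [Fintype Ω] [DecidableEq S] {μ : Ω → ℝ}
    (hμ : ∀ ω, 0 ≤ μ ω) (X : Ω → S) (s : S) : 0 ≤ prob μ X s :=
  Finset.sum_nonneg fun ω _ => hμ ω

lemma prob_mono {Ω S T : Type*} [Fintype Ω] [DecidableEq S] [DecidableEq T]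
    {μ : Ω → ℝ} (hμ : ∀ ω, 0 ≤ μ ω) {X : Ω → S} {Y : Ω → T} {s : S} {t : T}
    (h : ∀ ω, X ω = s → Y ω = t) : prob μ X s ≤ prob μ Y t := by
  apply Finset.sum_le_sum_of_subset_of_nonneg
  · intro ω hω
    simp only [Finset.mem_filter, Finset.mem_univ, true_and] at hω ⊢
    exact h ω hω
  · intro ω _ _; exact hμ ω

lemma prob_pair_split {Ω : Type*} [Fintype Ω] (μ : Ω → ℝ) (U V : Ω → Bool) (t : Bool) :
    prob μ (fun ω => (U ω, V ω)) (true, t) + prob μ (fun ω => (U ω, V ω)) (false, t)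
      = prob μ V t := by
  simp only [prob, ← Finset.sum_filter_add_sum_filter_not
    (Finset.univ.filter fun ω => V ω = t) (fun ω => U ω = true)]
  rw [Finset.filter_filter, Finset.filter_filter]
  congr 1 <;> (apply Finset.sum_congr _ (fun _ _ => rfl)) <;>
    (apply Finset.filter_congr; intro ω _; cases hU : U ω <;> simp [Prod.ext_iff, hU])

lemma cond_pos {Ω : Type*} [Fintype Ω] (μ : Ω → ℝ) (hμ : IsPMF μ) (U V : Ω → Bool)
    (t : Bool)
    (h1 : 0 < prob μ (fun ω => (U ω, V ω)) (true, t))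
    (h2 : 0 < prob μ (fun ω => (U ω, V ω)) (false, t)) :
    0 < condEntropy μ U V := by
  have hnn := hμ.1
  have key : ∀ s : Bool, Real.negMulLog (prob μ V s) ≤
      Real.negMulLog (prob μ (fun ω => (U ω, V ω)) (true, s)) +
      Real.negMulLog (prob μ (fun ω => (U ω, V ω)) (false, s)) := by
    intro s
    rw [← prob_pair_split μ U V s]
    exact negMulLog_add_le (prob_nonneg hnn _ _) (prob_nonneg hnn _ _)
  have keyt : Real.negMulLog (prob μ V t) <
      Real.negMulLog (prob μ (fun ω => (U ω, V ω)) (true, t)) +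
      Real.negMulLog (prob μ (fun ω => (U ω, V ω)) (false, t)) := by
    rw [← prob_pair_split μ U V t]
    exact negMulLog_add_lt h1 h2
  have e1 : entropy μ (fun ω => (U ω, V ω)) =
      (Real.negMulLog (prob μ (fun ω => (U ω, V ω)) (true, false)) +
       Real.negMulLog (prob μ (fun ω => (U ω, V ω)) (false, false))) +
      (Real.negMulLog (prob μ (fun ω => (U ω, V ω)) (true, true)) +
       Real.negMulLog (prob μ (fun ω => (U ω, V ω)) (false, true))) := by
    simp [entropy, Fintype.sum_prod_type, Fintype.sum_bool]
    ring
  have e2 : entropy μ V =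
      Real.negMulLog (prob μ V false) + Real.negMulLog (prob μ V true) := by
    simp [entropy, Fintype.sum_bool]
    ring
  unfold condEntropy
  rw [e1, e2]
  cases t
  · have := key true; linarith
  · have := key false; linarith

lemma half_case (n : ℕ) {Ω : Type*} [Fintype Ω] (μ : Ω → ℝ) (hμ : IsPMF μ)
    (X : Ω → ℕ)
    (hpos : ∀ i ∈ Finset.Icc 1 n, 0 < prob μ X i)
    (a b : Finset ℕ) (ha : a ⊆ Finset.Icc 2 n) (hb : b ⊆ Finset.Icc 2 n)
    (hane : a.Nonempty) (hab : a ≠ b) :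
    0 < condEntropy μ (fun ω => decide (X ω ∈ a)) (fun ω => decide (X ω ∈ b)) := by
  have hnn := hμ.1
  obtain ⟨i0, hi0⟩ := hane
  have hn2 : 2 ≤ n := le_trans (Finset.mem_Icc.mp (ha hi0)).1 (Finset.mem_Icc.mp (ha hi0)).2
  have h1n : (1 : ℕ) ∈ Finset.Icc 1 n := Finset.mem_Icc.mpr ⟨le_refl 1, by omega⟩
  have h1a : (1 : ℕ) ∉ a := fun h => by have := (Finset.mem_Icc.mp (ha h)).1; omega
  have h1b : (1 : ℕ) ∉ b := fun h => by have := (Finset.mem_Icc.mp (hb h)).1; omega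
  by_cases hsub : a ⊆ b
  · -- a ⊊ b : find j ∈ b \ a; use t = true
    have : ∃ j ∈ b, j ∉ a := by
      by_contra h
      push_neg at h
      exact hab (Finset.Subset.antisymm hsub h)
    obtain ⟨j, hjb, hja⟩ := this
    apply cond_pos μ hμ _ _ true
    · refine lt_of_lt_of_le (hpos i0 ?_) (prob_mono hnn ?_)
      · have := Finset.mem_Icc.mp (ha hi0); exact Finset.mem_Icc.mpr ⟨by omega, this.2⟩
      · intro ω hω; simp [hω, hi0, hsub hi0]
    · refine lt_of_lt_of_le (hpos j ?_) (prob_mono hnn ?_)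
      · have := Finset.mem_Icc.mp (hb hjb); exact Finset.mem_Icc.mpr ⟨by omega, this.2⟩
      · intro ω hω; simp [hω, hja, hjb]
  · -- find i ∈ a \ b; use t = false, pairing with X = 1
    obtain ⟨i, hia, hib⟩ := Finset.not_subset.mp hsub
    apply cond_pos μ hμ _ _ false
    · refine lt_of_lt_of_le (hpos i ?_) (prob_mono hnn ?_)
      · have := Finset.mem_Icc.mp (ha hia); exact Finset.mem_Icc.mpr ⟨by omega, this.2⟩
      · intro ω hω; simp [hω, hia, hib]
    · refine lt_of_lt_of_le (hpos 1 h1n) (prob_mono hnn ?_)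
      intro ω hω; simp [hω, h1a, h1b]

/-- For distinct nonempty `a, b ⊆ {2,…,n}` and `X` with strictly positive distribution on
`{1,…,n}`, the indicators of `X ∈ a` and `X ∈ b` are distinct: each has positive conditional
entropy given the other. -/
theorem indicators_distinct (n : ℕ) {Ω : Type*} [Fintype Ω] (μ : Ω → ℝ) (hμ : IsPMF μ)
    (X : Ω → ℕ) (hrange : ∀ ω, 0 < μ ω → X ω ∈ Finset.Icc 1 n)
    (hpos : ∀ i ∈ Finset.Icc 1 n, 0 < prob μ X i)
    (a b : Finset ℕ) (ha : a ⊆ Finset.Icc 2 n) (hb : b ⊆ Finset.Icc 2 n)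
    (hane : a.Nonempty) (hbne : b.Nonempty) (hab : a ≠ b) :
    0 < condEntropy μ (fun ω => decide (X ω ∈ a)) (fun ω => decide (X ω ∈ b)) ∧
    0 < condEntropy μ (fun ω => decide (X ω ∈ b)) (fun ω => decide (X ω ∈ a)) := by
  exact ⟨half_case n μ hμ X hpos a b ha hb hane hab,
         half_case n μ hμ X hpos b a hb ha hbne hab.symm⟩
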